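/- Let K = ℚ(p₁^{1/d₁}, …, p_n^{1/d_n}) where p_i, d_i are rational primes. Then every rational prime q that ramifies in K lies in the set {p₁, d₁, …, p_n, d_n}. -/

import Mathlib

open Polynomial NumberField

/-- The Mahler measure (logarithmic) of an integer polynomial:
`log |leading coefficient| + Σ log max(1,|z|)` over its complex roots. -/
noncomputable def logMahlerMeasure (q : Polynomial ℤ) : ℝ :=
  Real.log |(q.leadingCoeff : ℝ)| +
    ((q.aroots ℂ).map (fun z => Real.log (max 1 ‖z‖))).sum

/-- The primitive integer minimal polynomial of an algebraic number. -/
noncomputable def intMinpoly (α : ℂ) : Polynomial ℤ :=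
  (IsLocalization.integerNormalization (nonZeroDivisors ℤ) (minpoly ℚ α)).primPart

/-- The absolute logarithmic Weil height of an algebraic number `α : ℂ`,
defined as `(1/deg α) * log (Mahler measure of the minimal polynomial of α over ℤ)`.
For transcendental numbers we set it to `0`. -/
noncomputable def weilHeight (α : ℂ) : ℝ :=
  logMahlerMeasure (intMinpoly α) / (minpoly ℚ α).natDegree

/-- The degree of an algebraic number: `[ℚ(α):ℚ]`. -/
noncomputable def degAlg (α : ℂ) : ℕ := (minpoly ℚ α).natDegree

/-- `x` is an accumulation point of the set `s ⊆ ℝ`. -/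
def IsAccumulationPoint (s : Set ℝ) (x : ℝ) : Prop :=
  ∀ η > 0, ∃ y ∈ s, y ≠ x ∧ |y - x| < η

/-- A set `S` of complex (algebraic) numbers is `γ`-Northcott if for every `X` there are
only finitely many `α ∈ S` with `(deg α)^γ * h(α) ≤ X`. -/
def IsGammaNorthcott (S : Set ℂ) (γ : ℝ) : Prop :=
  ∀ X : ℝ, {α : ℂ | α ∈ S ∧ (degAlg α : ℝ) ^ γ * weilHeight α ≤ X}.Finite

/-- A set `S` of complex (algebraic) numbers is `γ`-Bogomolov if `0` is not an
accumulation point of `{(deg α)^γ * h(α) : α ∈ S}`. -/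
def IsGammaBogomolov (S : Set ℂ) (γ : ℝ) : Prop :=
  ¬ IsAccumulationPoint {x : ℝ | ∃ α ∈ S, (degAlg α : ℝ) ^ γ * weilHeight α = x} 0

/-!
A prime `Q` of `𝓞 L` that is ramified over a nonzero prime of `𝓞 F` divides the different of
`L/F`. When `L = F(x)` with `x ^ d = a`, the different contains `f'(x) = d * x ^ (d - 1)` for
`f = X ^ d - a`, so `Q` contains `d` or `a`. Ramification indices multiply in towers, so a prime
ramified in `ℚ(x₀, …, xₙ)` ramifies either in `ℚ(x₁, …, xₙ)` or in the step adjoining `x₀`, and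
induction reduces to `ℚ`, whose different over `ℤ` is trivial (take the generator `1`).
-/

theorem Ideal.comap_intCast_eq_span_of_natCast_mem {R : Type*} [CommRing R] {P : Ideal R}
    (hP : P ≠ ⊤) {q : ℕ} (hq : q.Prime) (hqP : (q : R) ∈ P) :
    P.comap (algebraMap ℤ R) = Ideal.span {(q : ℤ)} := by
  have hmax : (Ideal.span {(q : ℤ)}).IsMaximal :=
    PrincipalIdealRing.isMaximal_of_irreducible (Nat.prime_iff_prime_int.mp hq).irreducible
  refine (hmax.eq_of_le (Ideal.comap_ne_top _ hP) ?_).symm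
  rw [Ideal.span_le, Set.singleton_subset_iff, SetLike.mem_coe, Ideal.mem_comap, map_natCast]
  exact hqP

theorem Ideal.dvd_of_natCast_mem {R : Type*} [CommRing R] {P : Ideal R} (hP : P ≠ ⊤) {q m : ℕ}
    (hq : q.Prime) (hqP : (q : R) ∈ P) (hm : (m : R) ∈ P) : q ∣ m := by
  have : (m : ℤ) ∈ P.comap (algebraMap ℤ R) := by rwa [Ideal.mem_comap, map_natCast]
  rw [Ideal.comap_intCast_eq_span_of_natCast_mem hP hq hqP, Ideal.mem_span_singleton] at this
  exact_mod_cast this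

section Different

attribute [local instance] FractionRing.liftAlgebra

variable {A B : Type*} [CommRing A] [CommRing B] [Algebra A B]

theorem differentIdeal_le_of_one_lt_ramificationIdx' [IsDedekindDomain A] [IsDedekindDomain B]
    [Module.IsTorsionFree A B] [Module.Finite A B]
    [Algebra.IsSeparable (FractionRing A) (FractionRing B)]
    {P : Ideal A} [P.IsPrime] (hP : P ≠ ⊥) {Q : Ideal B} (he : 1 < Ideal.ramificationIdx' P Q) :
    differentIdeal A B ≤ Q := by
  have : P.IsMaximal := Ring.DimensionLEOne.maximalOfPrime hP ‹_›
  have hdvd : Q ^ (Ideal.ramificationIdx' P Q - 1) ∣ differentIdeal A B :=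
    pow_sub_one_dvd_differentIdeal A Q _ hP (Ideal.dvd_iff_le.mpr Ideal.le_pow_ramificationIdx')
  exact Ideal.le_of_dvd ((dvd_pow_self Q (by omega)).trans hdvd)

variable (K L : Type*) [Field K] [Field L] [Algebra A K] [Algebra B L] [Algebra K L] [Algebra A L]
  [IsScalarTower A K L] [IsScalarTower A B L] [IsDomain A] [IsFractionRing A K]
  [IsIntegrallyClosed A] [FiniteDimensional K L] [Algebra.IsSeparable K L]
  [IsIntegralClosure B A L] [IsDedekindDomain B] [Module.IsTorsionFree A B]

theorem aeval_derivative_mem_differentIdeal_of_aeval_eq_zero {x : B}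
    (hx : Algebra.adjoin K {algebraMap B L x} = ⊤) {f : A[X]} (hf : aeval x f = 0) :
    aeval x (derivative f) ∈ differentIdeal A B := by
  obtain ⟨g, rfl⟩ := minpoly.isIntegrallyClosed_dvd (IsIntegralClosure.isIntegral A L x) hf
  rw [derivative_mul, map_add, map_mul, map_mul, minpoly.aeval, zero_mul, add_zero]
  exact Ideal.mul_mem_right _ _ (aeval_derivative_mem_differentIdeal A K L x hx)

theorem natCast_mem_or_natCast_mem_of_pow_eq {Q : Ideal B} [Q.IsPrime]
    (hQ : differentIdeal A B ≤ Q) {x : B} (hx : Algebra.adjoin K {algebraMap B L x} = ⊤)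
    {a d : ℕ} (hd : d ≠ 0) (hxa : x ^ d = a) : (d : B) ∈ Q ∨ (a : B) ∈ Q := by
  have hmem := hQ <| aeval_derivative_mem_differentIdeal_of_aeval_eq_zero K L hx
    (f := X ^ d - C (a : A)) (by simp [hxa])
  simp only [derivative_sub, derivative_X_pow, derivative_natCast, sub_zero, map_mul,
    map_natCast, map_pow, aeval_X] at hmem
  refine (Ideal.IsPrime.mem_or_mem ‹_› hmem).imp_right fun hx' => ?_
  rw [← hxa]
  exact Ideal.pow_mem_of_mem Q (Ideal.IsPrime.mem_of_pow_mem ‹_› _ hx') d (Nat.pos_of_ne_zero hd)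

end Different

theorem IntermediateField.adjoin_eq_top_of_adjoin_image_val_eq {F E : Type*} [Field F] [Field E]
    [Algebra F E] {K : IntermediateField F E} {S : Set K} (h : adjoin F (Subtype.val '' S) = K) :
    adjoin F S = ⊤ :=
  K.lift_injective (by rw [lift_adjoin, lift_top, h])

def RamifiesIn (q : ℕ) (K : Type*) [Field K] : Prop :=
  ∃ P : Ideal (𝓞 K), P.IsPrime ∧ P ≠ ⊥ ∧ (q : 𝓞 K) ∈ P ∧
    1 < Ideal.ramificationIdx' (Ideal.span {(q : ℤ)}) P

namespace RamifiesIn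

open IntermediateField

theorem not_of_bot_eq_top {K : Type*} [Field K] [NumberField K]
    (hK : (⊥ : IntermediateField ℚ K) = ⊤) {q : ℕ} (hq : q.Prime) : ¬ RamifiesIn q K := by
  rintro ⟨P, hP, -, hqP, he⟩
  have hspan : Ideal.span {(q : ℤ)} ≠ ⊥ := by
    simpa [Ideal.span_singleton_eq_bot] using hq.ne_zero
  have : (Ideal.span {(q : ℤ)}).IsPrime :=
    (Ideal.span_singleton_prime (by exact_mod_cast hq.ne_zero)).mpr (Nat.prime_iff_prime_int.mp hq)
  have hgen : Algebra.adjoin ℚ {algebraMap (𝓞 K) K 1} = ⊤ := by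
    rw [map_one, Algebra.adjoin_singleton_one, ← bot_toSubalgebra, hK, top_toSubalgebra]
  have hone := differentIdeal_le_of_one_lt_ramificationIdx' hspan he <|
    aeval_derivative_mem_differentIdeal_of_aeval_eq_zero ℚ K hgen (f := X - C 1) (by simp)
  simp only [derivative_sub, derivative_X, derivative_one, sub_zero, map_one] at hone
  exact hP.ne_top ((Ideal.eq_top_iff_one P).mpr hone)

theorem dvd_or_dvd_or_ramifiesIn_of_adjoin_eq_top {F L : Type*} [Field F] [Field L]
    [NumberField F] [NumberField L] [Algebra F L] {x : L}
    (hx : adjoin F {x} = ⊤) {a d : ℕ} (hd : d ≠ 0) (hxa : x ^ d = a)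
    {q : ℕ} (hq : q.Prime) (h : RamifiesIn q L) : q ∣ a ∨ q ∣ d ∨ RamifiesIn q F := by
  obtain ⟨Q, hQ, -, hqQ, he⟩ := h
  let y : 𝓞 L := ⟨x, X ^ d - C (a : ℤ), monic_X_pow_sub_C _ hd, by simp [hxa]⟩
  have hya : y ^ d = a := RingOfIntegers.ext (by push_cast; exact hxa)
  have hgen : Algebra.adjoin F {algebraMap (𝓞 L) L y} = ⊤ := by
    change Algebra.adjoin F {x} = ⊤
    rw [← adjoin_simple_toSubalgebra_of_isAlgebraic (.of_finite F x), hx, top_toSubalgebra]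
  set P := Q.under (𝓞 F)
  have hqP : (q : 𝓞 F) ∈ P := by rwa [Ideal.mem_under, map_natCast]
  have hPbot : P ≠ ⊥ := fun hP => hq.ne_zero (by simpa [hP] using hqP)
  have : P.LiesOver (Ideal.span {(q : ℤ)}) :=
    ⟨(Ideal.comap_intCast_eq_span_of_natCast_mem Ideal.IsPrime.ne_top' hq hqP).symm⟩
  rw [Ideal.ramificationIdx'_algebra_tower' _ P Q] at he
  obtain hbot | htop : 1 < Ideal.ramificationIdx' (Ideal.span {(q : ℤ)}) P ∨
      1 < Ideal.ramificationIdx' P Q := by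
    contrapose! he
    simpa using Nat.mul_le_mul he.1 he.2
  · exact .inr <| .inr ⟨P, inferInstance, hPbot, hqP, hbot⟩
  · rcases natCast_mem_or_natCast_mem_of_pow_eq F L
      (differentIdeal_le_of_one_lt_ramificationIdx' hPbot htop) hgen hd hya with hdQ | haQ
    · exact .inr <| .inl (Ideal.dvd_of_natCast_mem hQ.ne_top hq hqQ hdQ)
    · exact .inl (Ideal.dvd_of_natCast_mem hQ.ne_top hq hqQ haQ)

theorem exists_dvd_of_adjoin_range_eq_top {K : Type*} [Field K] [NumberField K] {n : ℕ}
    {x : Fin n → K} {a d : Fin n → ℕ} (hd : ∀ i, d i ≠ 0) (hxa : ∀ i, x i ^ d i = a i)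
    (hK : adjoin ℚ (Set.range x) = ⊤) {q : ℕ} (hq : q.Prime)
    (h : RamifiesIn q K) : ∃ i, q ∣ a i ∨ q ∣ d i := by
  induction n generalizing K with
  | zero =>
    rw [Set.range_eq_empty, adjoin_empty] at hK
    exact absurd h (not_of_bot_eq_top hK hq)
  | succ n ih =>
    have hF : adjoin (adjoin ℚ (Set.range (Fin.tail x))) {x 0} = ⊤ := by
      have := adjoin_adjoin_left ℚ (Set.range (Fin.tail x)) {x 0}
      rw [Set.union_singleton, ← Fin.range_fin_succ, hK] at this
      exact restrictScalars_eq_top_iff.mp this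
    rcases h.dvd_or_dvd_or_ramifiesIn_of_adjoin_eq_top hF (hd 0) (hxa 0) hq with h | h | h
    · exact ⟨0, .inl h⟩
    · exact ⟨0, .inr h⟩
    · let y : Fin n → adjoin ℚ (Set.range (Fin.tail x)) := fun i =>
        ⟨x i.succ, subset_adjoin _ _ ⟨i, rfl⟩⟩
      have hy : adjoin ℚ (Set.range y) = ⊤ :=
        adjoin_eq_top_of_adjoin_image_val_eq (by rw [← Set.range_comp]; rfl)
      obtain ⟨i, hi⟩ := ih (x := y) (fun i => hd i.succ) (fun i => Subtype.ext (hxa i.succ)) hy h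
      exact ⟨i.succ, hi⟩

end RamifiesIn

open IntermediateField in
/-- Let `K = ℚ(p₁^{1/d₁}, …, p_n^{1/d_n})` where the `p i`, `d i` are rational primes
(and the roots are the real positive ones). Then every rational prime `q` that ramifies
in `K` lies in the set `{p₁, d₁, …, p_n, d_n}`. -/
theorem ramified_primes_of_adjoin_roots
    (n : ℕ) (p d : Fin n → ℕ) (hp : ∀ i, (p i).Prime) (hd : ∀ i, (d i).Prime)
    (K : IntermediateField ℚ ℂ) [NumberField K]
    (hK : K = adjoin ℚ (Set.range fun i => (((p i : ℝ) ^ ((d i : ℝ)⁻¹) : ℝ) : ℂ)))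
    (q : ℕ) (hq : q.Prime)
    (hram : ∃ P : Ideal (𝓞 K), P.IsPrime ∧ P ≠ ⊥ ∧ (q : 𝓞 K) ∈ P ∧
      1 < Ideal.ramificationIdx' (Ideal.span {(q : ℤ)}) P) :
    (∃ i, q = p i) ∨ (∃ i, q = d i) := by
  set r : Fin n → ℂ := fun i => (((p i : ℝ) ^ ((d i : ℝ)⁻¹) : ℝ) : ℂ)
  have hr : ∀ i, r i ∈ K := fun i => hK ▸ subset_adjoin ℚ _ ⟨i, rfl⟩
  have hr_pow : ∀ i, r i ^ d i = p i := fun i => by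
    rw [← Complex.ofReal_pow, Real.rpow_inv_natCast_pow (Nat.cast_nonneg _) (hd i).ne_zero,
      Complex.ofReal_natCast]
  have hgen : adjoin ℚ (Set.range fun i => (⟨r i, hr i⟩ : K)) = ⊤ :=
    adjoin_eq_top_of_adjoin_image_val_eq (by rw [← Set.range_comp]; exact hK.symm)
  obtain ⟨i, hi | hi⟩ := RamifiesIn.exists_dvd_of_adjoin_range_eq_top
    (fun i => (hd i).ne_zero) (fun i => Subtype.ext (by push_cast; exact hr_pow i)) hgen hq hram
  · exact .inl ⟨i, (Nat.prime_dvd_prime_iff_eq hq (hp i)).mp hi⟩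
  · exact .inr ⟨i, (Nat.prime_dvd_prime_iff_eq hq (hd i)).mp hi⟩
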